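/- arXiv:2402.12148 — 3 statements merged into one kernel-verified Lean document; each statement's English description precedes it below -/
import Mathlib

section
/- Let k ≥ 1, n ≥ 1 and let A, B be sets of 2-element subsets of {1,…,n}. If {i,j} ∈ A ∩ B with i ≠ j, then the vertex sequence v_0, K^0_1[i], K^0_2[j], K^0_3[i], …, K^0_{2k}[j] (where K^0_ℓ carries label i for odd ℓ and label j for even ℓ), w, K^1_{2k}[i], K^1_{2k-1}[j], …, K^1_1[j] (where K^1_ℓ carries label i for even ℓ and label j for odd ℓ), v_1 is an induced path on 4k+3 vertices in G_{k,n}(A,B). -/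
/-!
The graph `G_{k,n}(A,B)` from the paper "Local certification of forbidden subgraphs".

Vertices: clique vertices `(b, ℓ, i)` where `b : Bool` is the side (false = superscript 0,
true = superscript 1), `ℓ : Fin (2*k)` is the (0-based) level, so `K^b_{ℓ+1}` in the paper's
1-based notation, and `i : Fin n` is the label inside the clique; plus three special vertices
`Sum.inr 0 = v₀`, `Sum.inr 1 = v₁`, `Sum.inr 2 = w`.

A set `A` of 2-element subsets of `{1,…,n}` is encoded as `A : Set (Sym2 (Fin n))` all of whose
members are non-diagonal.
-/

/-- Vertex type of `G_{k,n}(A,B)`. -/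
abbrev GknVert (k n : ℕ) := (Bool × Fin (2 * k) × Fin n) ⊕ Fin 3

/-- The edges of `G_{k,n}(A,B)`, given in one direction; the graph is obtained by
symmetrizing with `SimpleGraph.fromRel`. -/
def gknRel (k n : ℕ) (A B : Set (Sym2 (Fin n))) :
    GknVert k n → GknVert k n → Prop
  | Sum.inl (b, l, i), Sum.inl (b', l', j) =>
      -- edges inside one clique
      (b = b' ∧ l = l' ∧ i ≠ j) ∨
      -- the bipartite graph `G_A` between `K^0_1` and `K^1_1`
      (b = false ∧ b' = true ∧ (l : ℕ) = 0 ∧ (l' : ℕ) = 0 ∧ (i = j ∨ s(i, j) ∉ A)) ∨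
      -- the bipartite graph `G_B` between `K^0_{2k}` and `K^1_{2k}`
      (b = false ∧ b' = true ∧ (l : ℕ) = 2 * k - 1 ∧ (l' : ℕ) = 2 * k - 1 ∧
        (i = j ∨ s(i, j) ∉ B)) ∨
      -- the perfect matchings between `K^0_ℓ` and `K^1_ℓ` for `2 ≤ ℓ ≤ 2k-1` (1-based)
      (b ≠ b' ∧ l = l' ∧ 1 ≤ (l : ℕ) ∧ (l : ℕ) ≤ 2 * k - 2 ∧ i = j) ∨
      -- the antimatchings between consecutive levels (all four pairs of cliques)
      ((l' : ℕ) = (l : ℕ) + 1 ∧ i ≠ j)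
  | Sum.inl (b, l, _), Sum.inr s =>
      -- `v₀` is complete to `K^0_1`, `v₁` is complete to `K^1_1`,
      -- `w` is complete to `K^0_{2k} ∪ K^1_{2k}`
      (s = 0 ∧ b = false ∧ (l : ℕ) = 0) ∨
      (s = 1 ∧ b = true ∧ (l : ℕ) = 0) ∨
      (s = 2 ∧ (l : ℕ) = 2 * k - 1)
  | Sum.inr _, Sum.inl _ => False
  | Sum.inr _, Sum.inr _ => False

/-- The graph `G_{k,n}(A,B)`. -/
def Gkn (k n : ℕ) (A B : Set (Sym2 (Fin n))) : SimpleGraph (GknVert k n) :=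
  SimpleGraph.fromRel (gknRel k n A B)


/-- The explicit vertex sequence
`v₀, K^0_1[i], K^0_2[j], …, K^0_{2k}[j], w, K^1_{2k}[i], K^1_{2k-1}[j], …, K^1_1[j], v₁`
(indexed by `t = 0, 1, …, 4k+2`): `K^0_ℓ` carries label `i` for odd `ℓ` and `j` for even `ℓ`
(1-based), and `K^1_ℓ` carries label `i` for even `ℓ` and `j` for odd `ℓ`. -/
def gknPathSeq (k n : ℕ) (i j : Fin n) (t : ℕ) : GknVert k n :=
  if _h0 : t = 0 then Sum.inr 0
  else if _h1 : t ≤ 2 * k then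
    Sum.inl (false, ⟨t - 1, by omega⟩, if (t - 1) % 2 = 0 then i else j)
  else if _h2 : t = 2 * k + 1 then Sum.inr 2
  else if _h3 : t ≤ 4 * k + 1 then
    Sum.inl (true, ⟨4 * k + 1 - t, by omega⟩, if (4 * k + 1 - t) % 2 = 0 then j else i)
  else Sum.inr 1


set_option maxHeartbeats 4000000 in
private lemma gknAdjAux (k n : ℕ) (hk : 1 ≤ k)
    (A B : Set (Sym2 (Fin n)))
    (i j : Fin n) (hij : i ≠ j) (hAm : s(i,j) ∈ A) (hBm : s(i,j) ∈ B)
    (a b : ℕ) (hab : a < b) (hbb : b ≤ 4*k+2) :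
    (Gkn k n A B).Adj (gknPathSeq k n i j a) (gknPathSeq k n i j b) ↔ b = a + 1 := by
  have hij' : j ≠ i := Ne.symm hij
  have hAm' : s(j,i) ∈ A := by rwa [Sym2.eq_swap]
  have hBm' : s(j,i) ∈ B := by rwa [Sym2.eq_swap]
  rw [Gkn, SimpleGraph.fromRel_adj]
  by_cases hpa : (a-1) % 2 = 0 <;> by_cases hpb : (b-1) % 2 = 0 <;>
    by_cases hqa : (4*k+1-a) % 2 = 0 <;> by_cases hqb : (4*k+1-b) % 2 = 0 <;>
    simp only [gknPathSeq] <;> split_ifs <;>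
      first
      | (exfalso; omega)
      | (simp [gknRel, hpa, hpb, hqa, hqb, hij, hij', hAm, hBm, hAm', hBm', Fin.mk.injEq,
          Prod.mk.injEq, Sum.inl.injEq, Sum.inr.injEq, ne_eq] <;> omega)

set_option maxHeartbeats 1000000 in
private lemma gknSeqInj (k n : ℕ) (i j : Fin n)
    (a b : ℕ) (hab : a < b) (hbb : b ≤ 4*k+2) :
    gknPathSeq k n i j a ≠ gknPathSeq k n i j b := by
  simp only [gknPathSeq] <;> split_ifs <;>
    first
    | (exfalso; omega)
    | (intro h; exact absurd h (by
        simp only [ne_eq, Sum.inl.injEq, Prod.mk.injEq, Fin.mk.injEq, eq_self_iff_true,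
          true_and, and_true, not_and, Bool.false_eq_true, Bool.true_eq_false, false_and,
          not_false_eq_true, reduceCtorEq] <;>
        first
        | omega
        | (intro hx; exact absurd hx (by omega))))
    | simp

/-- if `{i,j} ∈ A ∩ B` with `i ≠ j`, then the explicit vertex sequence
`gknPathSeq k n i j` (on indices `0,…,4k+2`) is an induced path on `4k+3` vertices in
`G_{k,n}(A,B)`: it is injective on its index range and two of its vertices are adjacent
iff the indices are consecutive. -/
theorem gknPathSeq_isInducedPath
    (k n : ℕ) (hk : 1 ≤ k) (hn : 1 ≤ n)
    (A B : Set (Sym2 (Fin n)))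
    (hA : ∀ e ∈ A, ¬ e.IsDiag) (hB : ∀ e ∈ B, ¬ e.IsDiag)
    (i j : Fin n) (hij : i ≠ j) (hAB : s(i, j) ∈ A ∩ B) :
    (∀ a b : ℕ, a < b → b ≤ 4 * k + 2 →
        gknPathSeq k n i j a ≠ gknPathSeq k n i j b) ∧
    (∀ a b : ℕ, a ≤ 4 * k + 2 → b ≤ 4 * k + 2 →
        ((Gkn k n A B).Adj (gknPathSeq k n i j a) (gknPathSeq k n i j b) ↔
          (b = a + 1 ∨ a = b + 1))) := by
  refine ⟨fun a b hab hbb => gknSeqInj k n i j a b hab hbb, fun a b ha hb => ?_⟩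
  rcases lt_trichotomy a b with h | rfl | h
  · rw [gknAdjAux k n hk A B i j hij hAB.1 hAB.2 a b h hb]; omega
  · exact iff_of_false (SimpleGraph.irrefl _) (by omega)
  · rw [SimpleGraph.adj_comm, gknAdjAux k n hk A B i j hij hAB.1 hAB.2 b a h ha]; omega
end

section
/- Let k ≥ 1, n ≥ 1 and let A, B be sets of 2-element subsets of {1,…,n}. If S is a set of vertices of G_{k,n}(A,B) whose induced subgraph is a tree, then S contains at most 4k vertices belonging to the cliques (i.e., |S ∩ ⋃_{b∈{0,1}, 1≤ℓ≤2k} K^b_ℓ| ≤ 4k). -/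
lemma aux_acyclic_noTriangle {V : Type*} {H : SimpleGraph V} (h : H.IsAcyclic)
    {a b c : V} (hab : H.Adj a b) (hbc : H.Adj b c) (hac : H.Adj a c) : False := by
  have hab' := hab.ne
  have hbc' := hbc.ne
  have hac' := hac.ne
  refine h (SimpleGraph.Walk.cons hab (SimpleGraph.Walk.cons hbc (SimpleGraph.Walk.cons hac.symm SimpleGraph.Walk.nil))) ?_
  simp [SimpleGraph.Walk.isCycle_def, SimpleGraph.Walk.isTrail_def, Sym2.eq_iff]
  aesop

lemma aux_acyclic_noC5 {V : Type*} {H : SimpleGraph V} (h : H.IsAcyclic)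
    {a b c d e : V} (hac : a ≠ c) (had : a ≠ d) (hbd : b ≠ d) (hbe : b ≠ e) (hce : c ≠ e)
    (h1 : H.Adj a b) (h2 : H.Adj b c) (h3 : H.Adj c d) (h4 : H.Adj d e) (h5 : H.Adj a e) : False := by
  have n1 := h1.ne
  have n2 := h2.ne
  have n3 := h3.ne
  have n4 := h4.ne
  have n5 := h5.ne
  refine h (SimpleGraph.Walk.cons h1 (SimpleGraph.Walk.cons h2 (SimpleGraph.Walk.cons h3 (SimpleGraph.Walk.cons h4 (SimpleGraph.Walk.cons h5.symm SimpleGraph.Walk.nil))))) ?_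
  simp [SimpleGraph.Walk.isCycle_def, SimpleGraph.Walk.isTrail_def, Sym2.eq_iff]
  aesop

structure GoodCfg {α : Type*} (adj : α → α → Prop) (lvl sde : α → Bool) (idx : α → ℕ)
    (s : Finset α) : Prop where
  hinj : ∀ u ∈ s, ∀ v ∈ s, lvl u = lvl v → sde u = sde v → idx u = idx v → u = v
  h1 : ∀ u ∈ s, ∀ v ∈ s, u ≠ v → lvl u = lvl v → sde u = sde v → adj u v
  h2 : ∀ u ∈ s, ∀ v ∈ s, lvl u = lvl v → sde u ≠ sde v → idx u = idx v → adj u v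
  h3 : ∀ u ∈ s, ∀ v ∈ s, lvl u ≠ lvl v → idx u ≠ idx v → adj u v
  noT : ∀ a ∈ s, ∀ b ∈ s, ∀ c ∈ s, adj a b → adj b c → adj a c → False
  noC5 : ∀ a ∈ s, ∀ b ∈ s, ∀ c ∈ s, ∀ d ∈ s, ∀ e ∈ s, a ≠ c → a ≠ d → b ≠ d → b ≠ e → c ≠ e →
    adj a b → adj b c → adj c d → adj d e → adj e a → False

namespace GoodCfg

variable {α : Type*} {adj : α → α → Prop} {lvl sde : α → Bool} {idx : α → ℕ} {s : Finset α}

lemma flipLvl (H : GoodCfg adj lvl sde idx s) :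
    GoodCfg adj (fun v => !lvl v) sde idx s where
  hinj := fun u hu v hv hl => H.hinj u hu v hv (by simpa using hl)
  h1 := fun u hu v hv hne hl => H.h1 u hu v hv hne (by simpa using hl)
  h2 := fun u hu v hv hl => H.h2 u hu v hv (by simpa using hl)
  h3 := fun u hu v hv hl => H.h3 u hu v hv (by simpa using hl)
  noT := H.noT
  noC5 := H.noC5

lemma flipSde (H : GoodCfg adj lvl sde idx s) :
    GoodCfg adj lvl (fun v => !sde v) idx s where
  hinj := fun u hu v hv hl hs => H.hinj u hu v hv hl (by simpa using hs)
  h1 := fun u hu v hv hne hl hs => H.h1 u hu v hv hne hl (by simpa using hs)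
  h2 := fun u hu v hv hl hs => H.h2 u hu v hv hl (by simpa using hs)
  h3 := H.h3
  noT := H.noT
  noC5 := H.noC5

/-- helper: distinct because of an attribute -/
lemma ne_of_attr {f : α → Bool} {u v : α} (h : f u ≠ f v) : u ≠ v :=
  fun e => h (congrArg f e)

lemma ne_of_idx {u v : α} (h : idx u ≠ idx v) : u ≠ v :=
  fun e => h (congrArg idx e)

lemma keyC32' (H : GoodCfg adj lvl sde idx s) {u1 u2 u3 x x' : α}
    (hu1 : u1 ∈ s) (hu2 : u2 ∈ s) (hu3 : u3 ∈ s) (hx : x ∈ s) (hx' : x' ∈ s)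
    (l1 : lvl u1 = false) (l2 : lvl u2 = false) (l3 : lvl u3 = false)
    (lx : lvl x = true) (lx' : lvl x' = true)
    (s12 : sde u1 = sde u2) (s13 : sde u1 ≠ sde u3) (ne12 : u1 ≠ u2)
    (hm : idx x = idx u1) (hm' : idx x' = idx u2) : False := by
  have hij : idx u1 ≠ idx u2 :=
    fun e => ne12 (H.hinj u1 hu1 u2 hu2 (l1.trans l2.symm) s12 e)
  have lxu1 : lvl x ≠ lvl u1 := by rw [lx, l1]; simp
  have lxu2 : lvl x ≠ lvl u2 := by rw [lx, l2]; simp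
  have lxu3 : lvl x ≠ lvl u3 := by rw [lx, l3]; simp
  have lx'u1 : lvl x' ≠ lvl u1 := by rw [lx', l1]; simp
  have lx'u2 : lvl x' ≠ lvl u2 := by rw [lx', l2]; simp
  have lx'u3 : lvl x' ≠ lvl u3 := by rw [lx', l3]; simp
  by_cases hp1 : idx u3 = idx u1
  · -- triangle u1 u3 x'
    have a1 : adj u1 u3 := H.h2 u1 hu1 u3 hu3 (l1.trans l3.symm) s13 hp1.symm
    have a2 : adj u3 x' := H.h3 u3 hu3 x' hx' (Ne.symm lx'u3) (by rw [hp1, hm']; exact hij)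
    have a3 : adj u1 x' := H.h3 u1 hu1 x' hx' (Ne.symm lx'u1) (by rw [hm']; exact hij)
    exact H.noT u1 hu1 u3 hu3 x' hx' a1 a2 a3
  by_cases hp2 : idx u3 = idx u2
  · -- triangle u2 u3 x
    have a1 : adj u2 u3 := H.h2 u2 hu2 u3 hu3 (l2.trans l3.symm) (s12 ▸ s13) hp2.symm
    have a2 : adj u3 x := H.h3 u3 hu3 x hx (Ne.symm lxu3) (by rw [hp2, hm]; exact hij.symm)
    have a3 : adj u2 x := H.h3 u2 hu2 x hx (Ne.symm lxu2) (by rw [hm]; exact hij.symm)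
    exact H.noT u2 hu2 u3 hu3 x hx a1 a2 a3
  · -- 5-cycle x u2 u1 x' u3
    have e1 : adj x u2 := H.h3 x hx u2 hu2 lxu2 (by rw [hm]; exact hij)
    have e2 : adj u2 u1 := H.h1 u2 hu2 u1 hu1 ne12.symm (l2.trans l1.symm) s12.symm
    have e3 : adj u1 x' := H.h3 u1 hu1 x' hx' (Ne.symm lx'u1) (by rw [hm']; exact hij)
    have e4 : adj x' u3 := H.h3 x' hx' u3 hu3 lx'u3 (by rw [hm']; exact fun e => hp2 e.symm)
    have e5 : adj u3 x := H.h3 u3 hu3 x hx (Ne.symm lxu3) (by rw [hm]; exact hp1)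
    exact H.noC5 x hx u2 hu2 u1 hu1 x' hx' u3 hu3
      (ne_of_attr lxu1) (ne_of_idx (idx := idx) (by rw [hm, hm']; exact hij))
      (ne_of_attr lx'u2.symm) (ne_of_attr (s12 ▸ s13 : sde u2 ≠ sde u3))
      (ne_of_attr s13) e1 e2 e3 e4 e5

lemma keyC32 (H : GoodCfg adj lvl sde idx s) {u1 u2 u3 x x' : α}
    (hu1 : u1 ∈ s) (hu2 : u2 ∈ s) (hu3 : u3 ∈ s) (hx : x ∈ s) (hx' : x' ∈ s)
    (l1 : lvl u1 = false) (l2 : lvl u2 = false) (l3 : lvl u3 = false)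
    (lx : lvl x = true) (lx' : lvl x' = true)
    (s12 : sde u1 = sde u2) (s13 : sde u1 ≠ sde u3) (ne12 : u1 ≠ u2)
    (nexx : x ≠ x') : False := by
  have hij : idx u1 ≠ idx u2 :=
    fun e => ne12 (H.hinj u1 hu1 u2 hu2 (l1.trans l2.symm) s12 e)
  have lxu1 : lvl x ≠ lvl u1 := by rw [lx, l1]; simp
  have lxu2 : lvl x ≠ lvl u2 := by rw [lx, l2]; simp
  have lx'u1 : lvl x' ≠ lvl u1 := by rw [lx', l1]; simp
  have lx'u2 : lvl x' ≠ lvl u2 := by rw [lx', l2]; simp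
  -- idx x ∈ {idx u1, idx u2}
  have hmx : idx x = idx u1 ∨ idx x = idx u2 := by
    by_contra hcon
    push_neg at hcon
    exact H.noT x hx u1 hu1 u2 hu2 (H.h3 x hx u1 hu1 lxu1 hcon.1)
      (H.h1 u1 hu1 u2 hu2 ne12 (l1.trans l2.symm) s12) (H.h3 x hx u2 hu2 lxu2 hcon.2)
  have hmx' : idx x' = idx u1 ∨ idx x' = idx u2 := by
    by_contra hcon
    push_neg at hcon
    exact H.noT x' hx' u1 hu1 u2 hu2 (H.h3 x' hx' u1 hu1 lx'u1 hcon.1)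
      (H.h1 u1 hu1 u2 hu2 ne12 (l1.trans l2.symm) s12) (H.h3 x' hx' u2 hu2 lx'u2 hcon.2)
  have hmm : idx x ≠ idx x' := by
    intro e
    have hsxx : sde x ≠ sde x' := fun hs => nexx (H.hinj x hx x' hx' (lx.trans lx'.symm) hs e)
    have axx : adj x x' := H.h2 x hx x' hx' (lx.trans lx'.symm) hsxx e
    rcases hmx with h | h
    · have h' : idx x' = idx u1 := e ▸ h
      exact H.noT x hx x' hx' u2 hu2 axx
        (H.h3 x' hx' u2 hu2 lx'u2 (by rw [h']; exact hij))
        (H.h3 x hx u2 hu2 lxu2 (by rw [h]; exact hij))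
    · have h' : idx x' = idx u2 := e ▸ h
      exact H.noT x hx x' hx' u1 hu1 axx
        (H.h3 x' hx' u1 hu1 lx'u1 (by rw [h']; exact hij.symm))
        (H.h3 x hx u1 hu1 lxu1 (by rw [h]; exact hij.symm))
  rcases hmx with h | h <;> rcases hmx' with h' | h'
  · exact hmm (h.trans h'.symm)
  · exact keyC32' H hu1 hu2 hu3 hx hx' l1 l2 l3 lx lx' s12 s13 ne12 h h'
  · exact keyC32' H hu1 hu2 hu3 hx' hx l1 l2 l3 lx' lx s12 s13 ne12 h' h
  · exact hmm (h.trans h'.symm)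

lemma keyB41' (H : GoodCfg adj lvl sde idx s) {u1 u2 u3 u4 x : α}
    (hu1 : u1 ∈ s) (hu2 : u2 ∈ s) (hu3 : u3 ∈ s) (hu4 : u4 ∈ s) (hx : x ∈ s)
    (l1 : lvl u1 = false) (l2 : lvl u2 = false) (l3 : lvl u3 = false) (l4 : lvl u4 = false)
    (lx : lvl x = true)
    (s12 : sde u1 = sde u2) (s34 : sde u3 = sde u4) (s13 : sde u1 ≠ sde u3)
    (ne12 : u1 ≠ u2) (ne34 : u3 ≠ u4)
    (hm1 : idx x = idx u1) (hm3 : idx x = idx u3) : False := by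
  have hij : idx u1 ≠ idx u2 :=
    fun e => ne12 (H.hinj u1 hu1 u2 hu2 (l1.trans l2.symm) s12 e)
  have hpq : idx u3 ≠ idx u4 :=
    fun e => ne34 (H.hinj u3 hu3 u4 hu4 (l3.trans l4.symm) s34 e)
  have lxu2 : lvl x ≠ lvl u2 := by rw [lx, l2]; simp
  have lxu4 : lvl x ≠ lvl u4 := by rw [lx, l4]; simp
  have e1 : adj x u2 := H.h3 x hx u2 hu2 lxu2 (by rw [hm1]; exact hij)
  have e2 : adj u2 u1 := H.h1 u2 hu2 u1 hu1 ne12.symm (l2.trans l1.symm) s12.symm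
  have e3 : adj u1 u3 := H.h2 u1 hu1 u3 hu3 (l1.trans l3.symm) s13 (hm1.symm.trans hm3)
  have e4 : adj u3 u4 := H.h1 u3 hu3 u4 hu4 ne34 (l3.trans l4.symm) s34
  have e5 : adj u4 x := H.h3 u4 hu4 x hx (Ne.symm lxu4) (by rw [hm3]; exact hpq.symm)
  exact H.noC5 x hx u2 hu2 u1 hu1 u3 hu3 u4 hu4
    (ne_of_attr (by rw [lx, l1]; simp : lvl x ≠ lvl u1))
    (ne_of_attr (by rw [lx, l3]; simp : lvl x ≠ lvl u3))
    (ne_of_attr (s12 ▸ s13 : sde u2 ≠ sde u3))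
    (ne_of_attr (s34 ▸ s12 ▸ s13 : sde u2 ≠ sde u4))
    (ne_of_attr (s34 ▸ s13 : sde u1 ≠ sde u4)) e1 e2 e3 e4 e5

lemma keyB41 (H : GoodCfg adj lvl sde idx s) {u1 u2 u3 u4 x : α}
    (hu1 : u1 ∈ s) (hu2 : u2 ∈ s) (hu3 : u3 ∈ s) (hu4 : u4 ∈ s) (hx : x ∈ s)
    (l1 : lvl u1 = false) (l2 : lvl u2 = false) (l3 : lvl u3 = false) (l4 : lvl u4 = false)
    (lx : lvl x = true)
    (s12 : sde u1 = sde u2) (s34 : sde u3 = sde u4) (s13 : sde u1 ≠ sde u3)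
    (ne12 : u1 ≠ u2) (ne34 : u3 ≠ u4) : False := by
  have lxu1 : lvl x ≠ lvl u1 := by rw [lx, l1]; simp
  have lxu2 : lvl x ≠ lvl u2 := by rw [lx, l2]; simp
  have lxu3 : lvl x ≠ lvl u3 := by rw [lx, l3]; simp
  have lxu4 : lvl x ≠ lvl u4 := by rw [lx, l4]; simp
  have hmx : idx x = idx u1 ∨ idx x = idx u2 := by
    by_contra hcon
    push_neg at hcon
    exact H.noT x hx u1 hu1 u2 hu2 (H.h3 x hx u1 hu1 lxu1 hcon.1)
      (H.h1 u1 hu1 u2 hu2 ne12 (l1.trans l2.symm) s12) (H.h3 x hx u2 hu2 lxu2 hcon.2)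
  have hmx' : idx x = idx u3 ∨ idx x = idx u4 := by
    by_contra hcon
    push_neg at hcon
    exact H.noT x hx u3 hu3 u4 hu4 (H.h3 x hx u3 hu3 lxu3 hcon.1)
      (H.h1 u3 hu3 u4 hu4 ne34 (l3.trans l4.symm) s34) (H.h3 x hx u4 hu4 lxu4 hcon.2)
  rcases hmx with h | h <;> rcases hmx' with h' | h'
  · exact keyB41' H hu1 hu2 hu3 hu4 hx l1 l2 l3 l4 lx s12 s34 s13 ne12 ne34 h h'
  · exact keyB41' H hu1 hu2 hu4 hu3 hx l1 l2 l4 l3 lx s12 s34.symm (s34 ▸ s13) ne12 ne34.symm h h'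
  · exact keyB41' H hu2 hu1 hu3 hu4 hx l2 l1 l3 l4 lx s12.symm s34 (s12 ▸ s13) ne12.symm ne34 h h'
  · exact keyB41' H hu2 hu1 hu4 hu3 hx l2 l1 l4 l3 lx s12.symm s34.symm (s12 ▸ s34 ▸ s13)
      ne12.symm ne34.symm h h'

lemma classBound [DecidableEq α] (H : GoodCfg adj lvl sde idx s) (bl bs : Bool) :
    (s.filter (fun v => lvl v = bl ∧ sde v = bs)).card ≤ 2 := by
  classical
  by_contra hcon
  push_neg at hcon
  obtain ⟨a, ha, b, hb, c, hc, hab, hac, hbc⟩ := Finset.two_lt_card.mp hcon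
  simp only [Finset.mem_filter] at ha hb hc
  exact H.noT a ha.1 b hb.1 c hc.1
    (H.h1 a ha.1 b hb.1 hab (ha.2.1.trans hb.2.1.symm) (ha.2.2.trans hb.2.2.symm))
    (H.h1 b hb.1 c hc.1 hbc (hb.2.1.trans hc.2.1.symm) (hb.2.2.trans hc.2.2.symm))
    (H.h1 a ha.1 c hc.1 hac (ha.2.1.trans hc.2.1.symm) (ha.2.2.trans hc.2.2.symm))


lemma sdePartition [DecidableEq α] (t : Finset α) (f : α → Bool) :
    (t.filter (fun v => f v = false)).card + (t.filter (fun v => f v = true)).card = t.card := by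
  have h := Finset.card_filter_add_card_filter_not (s := t) (p := fun v => f v = false)
  rwa [Finset.filter_congr (fun x _ => by simp : ∀ x ∈ t, (¬ f x = false ↔ f x = true))] at h

lemma half2 [DecidableEq α] (H : GoodCfg adj lvl sde idx s) (hcard : 5 ≤ s.card)
    (h2F : 2 ≤ (s.filter (fun v => lvl v = false ∧ sde v = false)).card)
    (h1T : 1 ≤ (s.filter (fun v => lvl v = false ∧ sde v = true)).card) : False := by
  classical
  obtain ⟨u1, hu1, u2, hu2, ne12⟩ := Finset.one_lt_card.mp h2F
  simp only [Finset.mem_filter] at hu1 hu2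
  by_cases ht : 2 ≤ (s.filter (fun v => lvl v = true)).card
  · obtain ⟨x, hx, x', hx', nexx⟩ := Finset.one_lt_card.mp ht
    simp only [Finset.mem_filter] at hx hx'
    obtain ⟨u3, hu3⟩ := Finset.card_pos.mp h1T
    simp only [Finset.mem_filter] at hu3
    exact keyC32 H hu1.1 hu2.1 hu3.1 hx.1 hx'.1 hu1.2.1 hu2.2.1 hu3.2.1 hx.2 hx'.2
      (hu1.2.2.trans hu2.2.2.symm) (by rw [hu1.2.2, hu3.2.2]; simp) ne12 nexx
  · push_neg at ht
    have hpart := sdePartition s lvl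
    have hpartL : (s.filter (fun v => lvl v = false)).filter (fun v => sde v = false) =
        s.filter (fun v => lvl v = false ∧ sde v = false) := by rw [Finset.filter_filter]
    have hpartL' : (s.filter (fun v => lvl v = false)).filter (fun v => sde v = true) =
        s.filter (fun v => lvl v = false ∧ sde v = true) := by rw [Finset.filter_filter]
    have hsplit := sdePartition (s.filter (fun v => lvl v = false)) sde
    rw [hpartL, hpartL'] at hsplit
    have hcF := H.classBound false false
    have hcT := H.classBound false true
    have h2T : 2 ≤ (s.filter (fun v => lvl v = false ∧ sde v = true)).card := by omega
    have h1x : 1 ≤ (s.filter (fun v => lvl v = true)).card := by omega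
    obtain ⟨u3, hu3, u4, hu4, ne34⟩ := Finset.one_lt_card.mp h2T
    simp only [Finset.mem_filter] at hu3 hu4
    obtain ⟨x, hx⟩ := Finset.card_pos.mp h1x
    simp only [Finset.mem_filter] at hx
    exact keyB41 H hu1.1 hu2.1 hu3.1 hu4.1 hx.1 hu1.2.1 hu2.2.1 hu3.2.1 hu4.2.1 hx.2
      (hu1.2.2.trans hu2.2.2.symm) (hu3.2.2.trans hu4.2.2.symm)
      (by rw [hu1.2.2, hu3.2.2]; simp) ne12 ne34

lemma half [DecidableEq α] (H : GoodCfg adj lvl sde idx s) (hcard : 5 ≤ s.card)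
    (h3L : 3 ≤ (s.filter (fun v => lvl v = false)).card) : False := by
  classical
  have hpartL : (s.filter (fun v => lvl v = false)).filter (fun v => sde v = false) =
      s.filter (fun v => lvl v = false ∧ sde v = false) := by rw [Finset.filter_filter]
  have hpartL' : (s.filter (fun v => lvl v = false)).filter (fun v => sde v = true) =
      s.filter (fun v => lvl v = false ∧ sde v = true) := by rw [Finset.filter_filter]
  have hsplit := sdePartition (s.filter (fun v => lvl v = false)) sde
  rw [hpartL, hpartL'] at hsplit
  have hcF := H.classBound false false
  have hcT := H.classBound false true
  by_cases hc : 2 ≤ (s.filter (fun v => lvl v = false ∧ sde v = false)).card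
  · exact H.half2 hcard hc (by omega)
  · -- flip sde
    have H' := flipSde H
    apply H'.half2 hcard
    · have : (s.filter (fun v => lvl v = false ∧ (!sde v) = false)) =
          (s.filter (fun v => lvl v = false ∧ sde v = true)) :=
        Finset.filter_congr (fun x _ => by simp)
      rw [this]; omega
    · have : (s.filter (fun v => lvl v = false ∧ (!sde v) = true)) =
          (s.filter (fun v => lvl v = false ∧ sde v = false)) :=
        Finset.filter_congr (fun x _ => by simp)
      rw [this]; omega

lemma mainCfg [DecidableEq α] (H : GoodCfg adj lvl sde idx s) (hcard : 5 ≤ s.card) : False := by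
  classical
  have hpart := sdePartition s lvl
  by_cases hL : 3 ≤ (s.filter (fun v => lvl v = false)).card
  · exact H.half hcard hL
  · have H' := flipLvl H
    apply H'.half hcard
    have : (s.filter (fun v => (!lvl v) = false)) = (s.filter (fun v => lvl v = true)) :=
      Finset.filter_congr (fun x _ => by simp)
    rw [this]; omega

end GoodCfg

section ConcreteAdjLemmas
variable {k n : ℕ} {A B : Set (Sym2 (Fin n))}

lemma gkn_adj_clique {b : Bool} {l : Fin (2 * k)} {i j : Fin n} (hij : i ≠ j) :
    (Gkn k n A B).Adj (Sum.inl (b, l, i)) (Sum.inl (b, l, j)) := by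
  refine (SimpleGraph.fromRel_adj _ _ _).mpr ⟨by simp [hij], Or.inl ?_⟩
  exact Or.inl ⟨rfl, rfl, hij⟩

lemma gkn_rel_match (l : Fin (2 * k)) (i : Fin n) :
    gknRel k n A B (Sum.inl (false, l, i)) (Sum.inl (true, l, i)) := by
  by_cases h0 : (l : ℕ) = 0
  · exact Or.inr (Or.inl ⟨rfl, rfl, h0, h0, Or.inl rfl⟩)
  by_cases h1 : (l : ℕ) = 2 * k - 1
  · exact Or.inr (Or.inr (Or.inl ⟨rfl, rfl, h1, h1, Or.inl rfl⟩))
  · have hl := l.isLt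
    exact Or.inr (Or.inr (Or.inr (Or.inl ⟨by simp, rfl, by omega, by omega, rfl⟩)))

lemma gkn_adj_match {b b' : Bool} {l : Fin (2 * k)} {i : Fin n} (hbb : b ≠ b') :
    (Gkn k n A B).Adj (Sum.inl (b, l, i)) (Sum.inl (b', l, i)) := by
  have hne : (Sum.inl (b, l, i) : GknVert k n) ≠ Sum.inl (b', l, i) := by simp [hbb]
  cases b <;> cases b' <;> simp at hbb
  · exact (SimpleGraph.fromRel_adj _ _ _).mpr ⟨hne, Or.inl (gkn_rel_match l i)⟩
  · exact (SimpleGraph.fromRel_adj _ _ _).mpr ⟨hne, Or.inr (gkn_rel_match l i)⟩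

lemma gkn_adj_anti {b b' : Bool} {l l' : Fin (2 * k)} {i j : Fin n}
    (hl : (l' : ℕ) = (l : ℕ) + 1) (hij : i ≠ j) :
    (Gkn k n A B).Adj (Sum.inl (b, l, i)) (Sum.inl (b', l', j)) := by
  refine (SimpleGraph.fromRel_adj _ _ _).mpr ⟨?_, Or.inl ?_⟩
  · simp only [ne_eq, Sum.inl.injEq, Prod.mk.injEq, not_and]
    intro _ hll
    rw [hll] at hl
    omega
  · exact Or.inr (Or.inr (Or.inr (Or.inr ⟨hl, hij⟩)))

end ConcreteAdjLemmas

lemma count_aux {beta : Type*} [DecidableEq beta] (F : Finset beta) (g : beta → ℕ) (k : ℕ)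
    (h1 : ∀ v ∈ F, g v < k) (h2 : ∀ m : ℕ, (F.filter (fun v => g v = m)).card ≤ 4) :
    F.card ≤ 4 * k := by
  have himg : F.image g ⊆ Finset.range k := by
    intro m hm
    obtain ⟨v, hv, rfl⟩ := Finset.mem_image.mp hm
    exact Finset.mem_range.mpr (h1 v hv)
  calc F.card ≤ 4 * (F.image g).card :=
        Finset.card_le_mul_card_image (f := g) F 4 (fun m _ => h2 m)
    _ ≤ 4 * k := by
        have hc := Finset.card_le_card himg
        rw [Finset.card_range] at hc
        omega

/-- Lemma: induced trees have at most `4k` vertices in the cliques: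
if the subgraph of `G_{k,n}(A,B)` induced by a vertex set `S` is a tree, then `S` contains
at most `4k` vertices belonging to the cliques (i.e. non-special vertices). -/
theorem gkn_inducedTree_atMost_4k_clique_vertices
    (k n : ℕ) (hk : 1 ≤ k) (hn : 1 ≤ n)
    (A B : Set (Sym2 (Fin n)))
    (hA : ∀ e ∈ A, ¬ e.IsDiag) (hB : ∀ e ∈ B, ¬ e.IsDiag)
    (S : Set (GknVert k n)) (hS : ((Gkn k n A B).induce S).IsTree) :
    {v ∈ S | ∃ x, v = Sum.inl x}.ncard ≤ 4 * k := by
  classical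
  obtain ⟨-, hacyc⟩ := hS
  set G := Gkn k n A B with hG
  -- the finite set of clique vertices of S
  set F : Finset (GknVert k n) := Finset.univ.filter (fun v => v ∈ S ∧ ∃ x, v = Sum.inl x)
    with hF
  have hset : {v ∈ S | ∃ x, v = Sum.inl x} = ↑F := by
    ext v
    simp [hF, Set.mem_setOf_eq]
  rw [hset, Set.ncard_coe_finset]
  -- per-pair-of-levels sets
  set sm : ℕ → Finset (Bool × Fin (2 * k) × Fin n) := fun m =>
    Finset.univ.filter (fun p => Sum.inl p ∈ S ∧ ((p.2.1 : ℕ)) / 2 = m) with hsm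
  have hmem : ∀ m, ∀ p ∈ sm m, Sum.inl p ∈ S ∧ ((p.2.1 : ℕ)) / 2 = m := by
    intro m p hp
    simpa [hsm] using (Finset.mem_filter.mp hp).2
  -- GoodCfg instance for each m
  have HG : ∀ m : ℕ, GoodCfg (fun p q => G.Adj (Sum.inl p) (Sum.inl q))
      (fun p => decide ((p.2.1 : ℕ) % 2 = 1)) (fun p => p.1) (fun p => (p.2.2 : ℕ)) (sm m) := by
    intro m
    have hlev : ∀ u ∈ sm m, ∀ v ∈ sm m,
        (decide ((u.2.1 : ℕ) % 2 = 1) = decide ((v.2.1 : ℕ) % 2 = 1)) → u.2.1 = v.2.1 := by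
      intro u hu v hv hdec
      have h1 := (hmem m u hu).2
      have h2 := (hmem m v hv).2
      have hiff := decide_eq_decide.mp hdec
      have hmod : (u.2.1 : ℕ) % 2 = (v.2.1 : ℕ) % 2 := by
        rcases Nat.mod_two_eq_zero_or_one (u.2.1 : ℕ) with h | h <;>
          rcases Nat.mod_two_eq_zero_or_one (v.2.1 : ℕ) with h' | h' <;>
            first
              | omega
              | (exfalso; rw [h, h'] at hiff; simp at hiff)
      exact Fin.ext (by omega)
    constructor
    · -- hinj
      intro u hu v hv hl hs hi
      have hll := hlev u hu v hv hl
      exact Prod.ext hs (Prod.ext hll (Fin.ext hi))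
    · -- h1
      intro u hu v hv hne hl hs
      have hll := hlev u hu v hv hl
      have hii : u.2.2 ≠ v.2.2 := by
        intro e
        exact hne (Prod.ext hs (Prod.ext hll e))
      have hv' : v = (u.1, u.2.1, v.2.2) := Prod.ext hs.symm (Prod.ext hll.symm rfl)
      rw [hv']
      exact gkn_adj_clique hii
    · -- h2
      intro u hu v hv hl hs hi
      have hll := hlev u hu v hv hl
      have hv' : v = (v.1, u.2.1, u.2.2) := Prod.ext rfl (Prod.ext hll.symm (Fin.ext hi).symm)
      rw [hv']
      exact gkn_adj_match hs
    · -- h3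
      intro u hu v hv hl hij
      have hijF : u.2.2 ≠ v.2.2 := fun e => hij (congrArg Fin.val e)
      have h1 := (hmem m u hu).2
      have h2 := (hmem m v hv).2
      have hmm : ¬(((u.2.1 : ℕ) % 2 = 1) ↔ ((v.2.1 : ℕ) % 2 = 1)) :=
        fun hiff => hl (decide_eq_decide.mpr hiff)
      have hcase : (v.2.1 : ℕ) = (u.2.1 : ℕ) + 1 ∨ (u.2.1 : ℕ) = (v.2.1 : ℕ) + 1 := by
        rcases Nat.mod_two_eq_zero_or_one (u.2.1 : ℕ) with h | h <;>
          rcases Nat.mod_two_eq_zero_or_one (v.2.1 : ℕ) with h' | h' <;>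
            first
              | omega
              | (exact absurd (by rw [h, h']) hmm)
      rcases hcase with h | h
      · exact gkn_adj_anti h hijF
      · exact (gkn_adj_anti h hijF.symm).symm
    · -- noT
      intro a ha b hb c hc hab hbc hac
      exact aux_acyclic_noTriangle hacyc
        (a := ⟨Sum.inl a, (hmem m a ha).1⟩) (b := ⟨Sum.inl b, (hmem m b hb).1⟩)
        (c := ⟨Sum.inl c, (hmem m c hc).1⟩) hab hbc hac
    · -- noC5
      intro a ha b hb c hc d hd e he hac had hbd hbe hce e1 e2 e3 e4 e5
      exact aux_acyclic_noC5 hacyc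
        (a := ⟨Sum.inl a, (hmem m a ha).1⟩) (b := ⟨Sum.inl b, (hmem m b hb).1⟩)
        (c := ⟨Sum.inl c, (hmem m c hc).1⟩) (d := ⟨Sum.inl d, (hmem m d hd).1⟩)
        (e := ⟨Sum.inl e, (hmem m e he).1⟩)
        (fun h => hac (Sum.inl_injective (congrArg Subtype.val h)))
        (fun h => had (Sum.inl_injective (congrArg Subtype.val h)))
        (fun h => hbd (Sum.inl_injective (congrArg Subtype.val h)))
        (fun h => hbe (Sum.inl_injective (congrArg Subtype.val h)))
        (fun h => hce (Sum.inl_injective (congrArg Subtype.val h)))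
        e1 e2 e3 e4 (G.adj_symm e5)
  have hsmcard : ∀ m : ℕ, (sm m).card ≤ 4 := by
    intro m
    by_contra hcon
    push_neg at hcon
    exact GoodCfg.mainCfg (HG m) (by omega)
  -- counting
  apply count_aux F (Sum.elim (fun p => (p.2.1 : ℕ) / 2) (fun _ => 0)) k
  · intro v hv
    rw [hF, Finset.mem_filter] at hv
    obtain ⟨p, rfl⟩ := hv.2.2
    have := p.2.1.isLt
    simp only [Sum.elim_inl]
    omega
  · intro m
    have heq : F.filter (fun v => Sum.elim (fun p => ((p.2.1 : ℕ)) / 2)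
        (fun _ => (0:ℕ)) v = m) = (sm m).image Sum.inl := by
      ext v
      simp only [hF, hsm, Finset.mem_filter, Finset.mem_univ, true_and, Finset.mem_image]
      constructor
      · rintro ⟨⟨hvS, p, rfl⟩, hgv⟩
        exact ⟨p, ⟨hvS, by simpa using hgv⟩, rfl⟩
      · rintro ⟨p, ⟨hpS, hp2⟩, rfl⟩
        exact ⟨⟨hpS, p, rfl⟩, by simpa using hp2⟩
    rw [heq, Finset.card_image_of_injective _ Sum.inl_injective]
    exact hsmcard m
end

section
/- Let k ≥ 1, n ≥ 1 and let A, B be sets of 2-element subsets of {1,…,n}. Let S be a set of at least 5 vertices of G_{k,n}(A,B) whose induced subgraph is a tree. Then: S contains at most two vertices of each clique; (i) if S contains two vertices of some clique K, then S contains at most one vertex of every clique antimatched with K; and (ii) if S contains two vertices of K^b_ℓ (for b ∈ {0,1} and ℓ ∈ {1,…,2k}), then S contains at most one vertex of K^{1-b}_ℓ. -/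
/-- The vertex set of the clique `K^b_{ℓ+1}` (0-based level `ℓ`). -/
def gknClique (k n : ℕ) (b : Bool) (l : Fin (2 * k)) : Set (GknVert k n) :=
  {v | ∃ i : Fin n, v = Sum.inl (b, l, i)}

section Aux

open SimpleGraph

variable {V : Type*} {G : SimpleGraph V}

private lemma noTriangle (h : G.IsAcyclic) {a b c : V}
    (hab : G.Adj a b) (hbc : G.Adj b c) (hac : G.Adj a c) : False := by
  have hpu := isAcyclic_iff_path_unique.mp h
  have hp1 : (Walk.cons hac Walk.nil : G.Walk a c).IsPath := by
    simp [Walk.isPath_def, hac.ne]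
  have hp2 : (Walk.cons hab (Walk.cons hbc Walk.nil) : G.Walk a c).IsPath := by
    simp [Walk.isPath_def, hab.ne, hac.ne, hbc.ne]
  have := hpu ⟨_, hp1⟩ ⟨_, hp2⟩
  have := congrArg (fun (p : G.Path a c) => p.1.length) this
  simp at this

private lemma noSquare (h : G.IsAcyclic) {a b c d : V}
    (hab : G.Adj a b) (hbc : G.Adj b c) (hcd : G.Adj c d) (hda : G.Adj d a)
    (hac : a ≠ c) (hbd : b ≠ d) : False := by
  have hpu := isAcyclic_iff_path_unique.mp h
  have hp1 : (Walk.cons hab (Walk.cons hbc Walk.nil) : G.Walk a c).IsPath := by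
    simp [Walk.isPath_def, hab.ne, hac, hbc.ne]
  have hp2 : (Walk.cons hda.symm (Walk.cons hcd.symm Walk.nil) : G.Walk a c).IsPath := by
    simp [Walk.isPath_def, hda.ne', hac, hcd.ne']
  have := hpu ⟨_, hp1⟩ ⟨_, hp2⟩
  have := congrArg (fun (p : G.Path a c) => p.1.support) this
  simp at this
  exact hbd this

private lemma noPentagon (h : G.IsAcyclic) {a b c d e : V}
    (hab : G.Adj a b) (hbc : G.Adj b c) (hcd : G.Adj c d) (hde : G.Adj d e)
    (hea : G.Adj e a) (hac : a ≠ c) (had : a ≠ d) (hce : c ≠ e) : False := by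
  have hpu := isAcyclic_iff_path_unique.mp h
  have hp1 : (Walk.cons hab (Walk.cons hbc Walk.nil) : G.Walk a c).IsPath := by
    simp [Walk.isPath_def, hab.ne, hac, hbc.ne]
  have hp2 : (Walk.cons hea.symm (Walk.cons hde.symm (Walk.cons hcd.symm Walk.nil)) :
      G.Walk a c).IsPath := by
    simp [Walk.isPath_def, hea.ne', had, hac, hde.ne', hce.symm, hcd.ne']
  have := hpu ⟨_, hp1⟩ ⟨_, hp2⟩
  have := congrArg (fun (p : G.Path a c) => p.1.length) this
  simp at this

variable {k n : ℕ} {A B : Set (Sym2 (Fin n))}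

private lemma gkn_adj_iff (u v : GknVert k n) :
    (Gkn k n A B).Adj u v ↔ u ≠ v ∧ (gknRel k n A B u v ∨ gknRel k n A B v u) :=
  SimpleGraph.fromRel_adj _ u v

private lemma adj_same_clique {b : Bool} {l : Fin (2*k)} {i j : Fin n} (hij : i ≠ j) :
    (Gkn k n A B).Adj (Sum.inl (b,l,i)) (Sum.inl (b,l,j)) := by
  rw [gkn_adj_iff]
  exact ⟨by simp [hij], Or.inl (Or.inl ⟨rfl, rfl, hij⟩)⟩

private lemma adj_antimatch {b b' : Bool} {l l' : Fin (2*k)} {i j : Fin n}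
    (hl : (l' : ℕ) = (l : ℕ) + 1) (hij : i ≠ j) :
    (Gkn k n A B).Adj (Sum.inl (b,l,i)) (Sum.inl (b',l',j)) := by
  rw [gkn_adj_iff]
  refine ⟨?_, Or.inl ?_⟩
  · intro heq
    have h2 : l = l' := congrArg (fun p => p.2.1) (Sum.inl.inj heq)
    exact absurd (congrArg Fin.val h2) (by omega)
  · exact Or.inr (Or.inr (Or.inr (Or.inr ⟨hl, hij⟩)))

private lemma adj_cross {b : Bool} {l : Fin (2*k)} {i : Fin n} (hk : 1 ≤ k) :
    (Gkn k n A B).Adj (Sum.inl (b,l,i)) (Sum.inl (!b,l,i)) := by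
  rw [gkn_adj_iff]
  have hne : (Sum.inl (b,l,i) : GknVert k n) ≠ Sum.inl (!b,l,i) := by
    simp
  refine ⟨hne, ?_⟩
  have hlt := l.isLt
  rcases Nat.lt_or_ge (l : ℕ) 1 with h0 | h1
  · have h0 : (l : ℕ) = 0 := by omega
    cases b
    · exact Or.inl (Or.inr (Or.inl ⟨rfl, rfl, h0, h0, Or.inl rfl⟩))
    · exact Or.inr (Or.inr (Or.inl ⟨rfl, rfl, h0, h0, Or.inl rfl⟩))
  · rcases Nat.lt_or_ge (l : ℕ) (2*k-1) with hm | ht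
    · exact Or.inl (Or.inr (Or.inr (Or.inr (Or.inl
        ⟨by simp, rfl, h1, by omega, rfl⟩))))
    · have htop : (l : ℕ) = 2*k - 1 := by omega
      cases b
      · exact Or.inl (Or.inr (Or.inr (Or.inl ⟨rfl, rfl, htop, htop, Or.inl rfl⟩)))
      · exact Or.inr (Or.inr (Or.inr (Or.inl ⟨rfl, rfl, htop, htop, Or.inl rfl⟩)))

private lemma adj_v0 {l : Fin (2*k)} {i : Fin n} (hl : (l : ℕ) = 0) :
    (Gkn k n A B).Adj (Sum.inl (false,l,i)) (Sum.inr 0) := by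
  rw [gkn_adj_iff]
  exact ⟨by simp, Or.inl (Or.inl ⟨rfl, rfl, hl⟩)⟩

private lemma adj_v1 {l : Fin (2*k)} {i : Fin n} (hl : (l : ℕ) = 0) :
    (Gkn k n A B).Adj (Sum.inl (true,l,i)) (Sum.inr 1) := by
  rw [gkn_adj_iff]
  exact ⟨by simp, Or.inl (Or.inr (Or.inl ⟨rfl, rfl, hl⟩))⟩

private lemma adj_w {b : Bool} {l : Fin (2*k)} {i : Fin n} (hl : (l : ℕ) = 2*k-1) :
    (Gkn k n A B).Adj (Sum.inl (b,l,i)) (Sum.inr 2) := by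
  rw [gkn_adj_iff]
  exact ⟨by simp, Or.inl (Or.inr (Or.inr ⟨rfl, hl⟩))⟩

private lemma adj_inl_cases {b : Bool} {l : Fin (2*k)} {i : Fin n} {x : GknVert k n}
    (h : (Gkn k n A B).Adj (Sum.inl (b,l,i)) x) :
    (∃ b' j, x = Sum.inl (b',l,j)) ∨
    (∃ (b' : Bool) (l' : Fin (2*k)) (j : Fin n), x = Sum.inl (b',l',j) ∧
       ((l' : ℕ) = (l : ℕ) + 1 ∨ (l : ℕ) = (l' : ℕ) + 1)) ∨
    (x = Sum.inr 0 ∧ b = false ∧ (l : ℕ) = 0) ∨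
    (x = Sum.inr 1 ∧ b = true ∧ (l : ℕ) = 0) ∨
    (x = Sum.inr 2 ∧ (l : ℕ) = 2*k-1) := by
  rw [gkn_adj_iff] at h
  obtain ⟨hne, h | h⟩ := h
  · rcases x with ⟨b', l', j⟩ | s
    · simp only [gknRel] at h
      rcases h with ⟨h1, h2, _⟩ | ⟨_, _, h1, h2, _⟩ | ⟨_, _, h1, h2, _⟩ |
        ⟨_, h2, _⟩ | ⟨h1, _⟩
      · exact Or.inl ⟨b', j, by rw [h2]⟩
      · exact Or.inl ⟨b', j, by rw [show l' = l from Fin.ext (by omega)]⟩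
      · exact Or.inl ⟨b', j, by rw [show l' = l from Fin.ext (by omega)]⟩
      · exact Or.inl ⟨b', j, by rw [h2]⟩
      · exact Or.inr (Or.inl ⟨b', l', j, rfl, Or.inl h1⟩)
    · simp only [gknRel] at h
      rcases h with ⟨h1, h2, h3⟩ | ⟨h1, h2, h3⟩ | ⟨h1, h2⟩
      · exact Or.inr (Or.inr (Or.inl ⟨by rw [h1], h2, h3⟩))
      · exact Or.inr (Or.inr (Or.inr (Or.inl ⟨by rw [h1], h2, h3⟩)))
      · exact Or.inr (Or.inr (Or.inr (Or.inr ⟨by rw [h1], h2⟩)))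
  · rcases x with ⟨b', l', j⟩ | s
    · simp only [gknRel] at h
      rcases h with ⟨h1, h2, _⟩ | ⟨_, _, h1, h2, _⟩ | ⟨_, _, h1, h2, _⟩ |
        ⟨_, h2, _⟩ | ⟨h1, _⟩
      · exact Or.inl ⟨b', j, by rw [← h2]⟩
      · exact Or.inl ⟨b', j, by rw [show l' = l from Fin.ext (by omega)]⟩
      · exact Or.inl ⟨b', j, by rw [show l' = l from Fin.ext (by omega)]⟩
      · exact Or.inl ⟨b', j, by rw [← h2]⟩
      · exact Or.inr (Or.inl ⟨b', l', j, rfl, Or.inr h1⟩)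
    · simp only [gknRel] at h

end Aux

/-- Claim about induced trees and cliques: let `S` induce a tree on at
least `5` vertices in `G_{k,n}(A,B)`. Then `S` has at most two vertices in each clique;
(i) if `S` has two vertices in a clique `K`, it has at most one vertex in every clique
antimatched with `K` (i.e. at a consecutive level); and (ii) if `S` has two vertices in
`K^b_ℓ`, it has at most one vertex in `K^{1-b}_ℓ`. -/
theorem gkn_inducedTree_clique_intersections
    (k n : ℕ) (hk : 1 ≤ k) (hn : 1 ≤ n)
    (A B : Set (Sym2 (Fin n)))
    (hA : ∀ e ∈ A, ¬ e.IsDiag) (hB : ∀ e ∈ B, ¬ e.IsDiag)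
    (S : Set (GknVert k n)) (hS : ((Gkn k n A B).induce S).IsTree)
    (hcard : 5 ≤ S.ncard) :
    (∀ (b : Bool) (l : Fin (2 * k)), (S ∩ gknClique k n b l).ncard ≤ 2) ∧
    (∀ (b : Bool) (l : Fin (2 * k)) (b' : Bool) (l' : Fin (2 * k)),
      ((l' : ℕ) = (l : ℕ) + 1 ∨ (l : ℕ) = (l' : ℕ) + 1) →
      2 ≤ (S ∩ gknClique k n b l).ncard → (S ∩ gknClique k n b' l').ncard ≤ 1) ∧
    (∀ (b : Bool) (l : Fin (2 * k)),
      2 ≤ (S ∩ gknClique k n b l).ncard → (S ∩ gknClique k n (!b) l).ncard ≤ 1) := by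
  classical
  set G := Gkn k n A B with hGdef
  have hacyc : (G.induce S).IsAcyclic := hS.IsAcyclic
  have hconn : (G.induce S).Connected := hS.isConnected
  have lift : ∀ {u v : GknVert k n} (hu : u ∈ S) (hv : v ∈ S),
      G.Adj u v → (G.induce S).Adj ⟨u, hu⟩ ⟨v, hv⟩ := by
    intro u v hu hv h
    exact h
  have tri : ∀ {a b c : GknVert k n}, a ∈ S → b ∈ S → c ∈ S →
      G.Adj a b → G.Adj b c → G.Adj a c → False := by
    intro a b c ha hb hc hab hbc hac
    exact noTriangle hacyc (lift ha hb hab) (lift hb hc hbc) (lift ha hc hac)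
  have sq : ∀ {a b c d : GknVert k n}, a ∈ S → b ∈ S → c ∈ S → d ∈ S →
      G.Adj a b → G.Adj b c → G.Adj c d → G.Adj d a → a ≠ c → b ≠ d → False := by
    intro a b c d ha hb hc hd h1 h2 h3 h4 h5 h6
    exact noSquare hacyc (lift ha hb h1) (lift hb hc h2) (lift hc hd h3) (lift hd ha h4)
      (fun h => h5 (congrArg Subtype.val h)) (fun h => h6 (congrArg Subtype.val h))
  have pent : ∀ {a b c d e : GknVert k n}, a ∈ S → b ∈ S → c ∈ S → d ∈ S → e ∈ S →
      G.Adj a b → G.Adj b c → G.Adj c d → G.Adj d e → G.Adj e a →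
      a ≠ c → a ≠ d → c ≠ e → False := by
    intro a b c d e ha hb hc hd he h1 h2 h3 h4 h5 h6 h7 h8
    exact noPentagon hacyc (lift ha hb h1) (lift hb hc h2) (lift hc hd h3) (lift hd he h4)
      (lift he ha h5) (fun h => h6 (congrArg Subtype.val h))
      (fun h => h7 (congrArg Subtype.val h)) (fun h => h8 (congrArg Subtype.val h))
  -- Part 1
  have part1 : ∀ (b : Bool) (l : Fin (2*k)), (S ∩ gknClique k n b l).ncard ≤ 2 := by
    intro b l
    by_contra hgt
    push_neg at hgt
    obtain ⟨x, y, z, hx, hy, hz, hxy, hxz, hyz⟩ :=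
      (Set.two_lt_ncard_iff (Set.toFinite _)).mp hgt
    obtain ⟨ix, rfl⟩ := hx.2
    obtain ⟨iy, rfl⟩ := hy.2
    obtain ⟨iz, rfl⟩ := hz.2
    exact tri hx.1 hy.1 hz.1 (adj_same_clique (by simpa using hxy))
      (adj_same_clique (by simpa using hyz)) (adj_same_clique (by simpa using hxz))
  have pairs : ∀ (b : Bool) (l : Fin (2*k)), 2 ≤ (S ∩ gknClique k n b l).ncard →
      ∃ i1 i2 : Fin n, i1 ≠ i2 ∧ Sum.inl (b,l,i1) ∈ S ∧ Sum.inl (b,l,i2) ∈ S := by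
    intro b l h
    have h' : 1 < (S ∩ gknClique k n b l).ncard := by omega
    obtain ⟨x, y, hx, hy, hxy⟩ := (Set.one_lt_ncard_iff (Set.toFinite _)).mp h'
    obtain ⟨ix, rfl⟩ := hx.2
    obtain ⟨iy, rfl⟩ := hy.2
    exact ⟨ix, iy, by simpa using hxy, hx.1, hy.1⟩
  -- Part (i) core
  have auxI : ∀ (b : Bool) (l : Fin (2*k)) (b' : Bool) (l' : Fin (2*k)),
      (l' : ℕ) = (l : ℕ) + 1 →
      2 ≤ (S ∩ gknClique k n b l).ncard → 2 ≤ (S ∩ gknClique k n b' l').ncard → False := by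
    intro b l b' l' hl h1 h2
    obtain ⟨i1, i2, hi, hu1, hu2⟩ := pairs b l h1
    obtain ⟨j1, j2, hj, hw1, hw2⟩ := pairs b' l' h2
    have hne : ∀ (c c' : Bool) (p q : Fin n),
        (Sum.inl (c,l,p) : GknVert k n) ≠ Sum.inl (c',l',q) := by
      intro c c' p q heq
      have h2 : l = l' := congrArg (fun p => p.2.1) (Sum.inl.inj heq)
      exact absurd (congrArg Fin.val h2) (by omega)
    rcases eq_or_ne i1 j1 with h11 | h11
    · rcases eq_or_ne i2 j2 with h22 | h22
      · -- square u1 u2 w1 w2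
        have e1 : i2 ≠ j1 := by rw [← h11]; exact hi.symm
        have e2 : i1 ≠ j2 := by rw [h11]; exact hj
        exact sq hu1 hu2 hw1 hw2 (adj_same_clique hi) (adj_antimatch hl e1)
          (adj_same_clique hj) (adj_antimatch hl e2).symm (hne _ _ _ _) (hne _ _ _ _)
      · -- triangle u2 w1 w2
        have e1 : i2 ≠ j1 := by rw [← h11]; exact hi.symm
        exact tri hu2 hw1 hw2 (adj_antimatch hl e1) (adj_same_clique hj)
          (adj_antimatch hl h22)
    · rcases eq_or_ne i1 j2 with h12 | h12
      · rcases eq_or_ne i2 j1 with h21 | h21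
        · -- square u1 u2 w2 w1
          have e1 : i2 ≠ j2 := by rw [h21]; exact hj
          exact sq hu1 hu2 hw2 hw1 (adj_same_clique hi) (adj_antimatch hl e1)
            (adj_same_clique hj.symm) (adj_antimatch hl h11).symm (hne _ _ _ _) (hne _ _ _ _)
        · -- triangle u2 w1 w2
          have e1 : i2 ≠ j2 := by rw [← h12]; exact hi.symm
          exact tri hu2 hw1 hw2 (adj_antimatch hl h21) (adj_same_clique hj)
            (adj_antimatch hl e1)
      · -- triangle u1 w1 w2
        exact tri hu1 hw1 hw2 (adj_antimatch hl h11) (adj_same_clique hj)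
          (adj_antimatch hl h12)
  -- Part (ii) core
  have auxII : ∀ (b : Bool) (l : Fin (2*k)),
      2 ≤ (S ∩ gknClique k n b l).ncard → 2 ≤ (S ∩ gknClique k n (!b) l).ncard → False := by
    intro b l h1 h2
    obtain ⟨i1, i2, hi, hu1, hu2⟩ := pairs b l h1
    obtain ⟨j1, j2, hj, hw1, hw2⟩ := pairs (!b) l h2
    have h2side : ∀ (c : Bool) (p1 p2 : Fin n), p1 ≠ p2 → Sum.inl (c,l,p1) ∈ S →
        Sum.inl (c,l,p2) ∈ S → ∀ m : Fin n, Sum.inl (c,l,m) ∈ S → m = p1 ∨ m = p2 := by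
      intro c p1 p2 hp hp1 hp2 m hm
      by_contra hcon
      push_neg at hcon
      have h3 : 2 < (S ∩ gknClique k n c l).ncard := by
        refine (Set.two_lt_ncard_iff (Set.toFinite _)).mpr
          ⟨Sum.inl (c,l,m), Sum.inl (c,l,p1), Sum.inl (c,l,p2),
            ⟨hm, m, rfl⟩, ⟨hp1, p1, rfl⟩, ⟨hp2, p2, rfl⟩, ?_, ?_, ?_⟩ <;>
          simp [hcon.1, hcon.2, hp]
      exact absurd (part1 c l) (by omega)
    have key : ∀ (c c' : Bool), c' = !c → ∀ (p1 p2 q1 q2 : Fin n), p1 ≠ p2 → q1 ≠ q2 →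
        Sum.inl (c,l,p1) ∈ S → Sum.inl (c,l,p2) ∈ S →
        Sum.inl (c',l,q1) ∈ S → Sum.inl (c',l,q2) ∈ S →
        ∀ x, x ∈ S → x ≠ Sum.inl (c,l,p1) → x ≠ Sum.inl (c,l,p2) →
          x ≠ Sum.inl (c',l,q1) → x ≠ Sum.inl (c',l,q2) →
          ¬ G.Adj (Sum.inl (c,l,p1)) x := by
      intro c c' hcc' p1 p2 q1 q2 hp hq hp1 hp2 hq1 hq2 x hxS hx1 hx2 hx3 hx4 hadj
      have hnecc : ∀ (p q : Fin n), (Sum.inl (c,l,p) : GknVert k n) ≠ Sum.inl (c',l,q) := by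
        subst hcc'
        intro p q heq
        simp at heq
      rcases adj_inl_cases hadj with ⟨b', j, rfl⟩ | ⟨b', l'', m, rfl, hll⟩ |
        ⟨rfl, hcf, hl0⟩ | ⟨rfl, hct, hl0⟩ | ⟨rfl, hl0⟩
      · -- same level
        have hb' : b' = c ∨ b' = c' := by subst hcc'; cases b' <;> cases c <;> simp
        rcases hb' with rfl | rfl
        · rcases h2side _ _ _ hp hp1 hp2 j hxS with rfl | rfl
          · exact hx1 rfl
          · exact hx2 rfl
        · rcases h2side _ _ _ hq hq1 hq2 j hxS with rfl | rfl
          · exact hx3 rfl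
          · exact hx4 rfl
      · -- adjacent level
        have hedge : ∀ (d : Bool) (r : Fin n), r ≠ m →
            G.Adj (Sum.inl (d,l,r)) (Sum.inl (b',l'',m)) := by
          intro d r hr
          rcases hll with h | h
          · exact adj_antimatch h hr
          · exact (adj_antimatch h (Ne.symm hr)).symm
        by_cases hm2 : m = p2
        · by_cases hmq1 : m = q1
          · -- pentagon x u1 u2 w1 w2
            have hq1p2 : q1 = p2 := by rw [← hmq1, hm2]
            have hcross : G.Adj (Sum.inl (c,l,p2)) (Sum.inl (c',l,q1)) := by
              subst hcc'
              rw [hq1p2]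
              exact adj_cross hk
            have hq2m : q2 ≠ m := by rw [hmq1]; exact hq.symm
            exact pent hxS hp1 hp2 hq1 hq2 hadj.symm (adj_same_clique hp) hcross
              (adj_same_clique hq) (hedge c' q2 hq2m) hx2 hx3 (hnecc _ _)
          · by_cases hmq2 : m = q2
            · -- pentagon x u1 u2 w2 w1
              have hq2p2 : q2 = p2 := by rw [← hmq2, hm2]
              have hcross : G.Adj (Sum.inl (c,l,p2)) (Sum.inl (c',l,q2)) := by
                subst hcc'
                rw [hq2p2]
                exact adj_cross hk
              have hq1m : q1 ≠ m := by rw [hmq2]; exact hq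
              exact pent hxS hp1 hp2 hq2 hq1 hadj.symm (adj_same_clique hp) hcross
                (adj_same_clique hq.symm) (hedge c' q1 hq1m) hx2 hx4 (hnecc _ _)
            · -- triangle w1 w2 x
              exact tri hq1 hq2 hxS (adj_same_clique hq) (hedge c' q2 (Ne.symm hmq2))
                (hedge c' q1 (Ne.symm hmq1))
        · -- triangle u1 u2 x
          exact tri hp1 hp2 hxS (adj_same_clique hp) (hedge c p2 (Ne.symm hm2)) hadj
      · -- x = v0
        subst hcf
        exact tri hp1 hp2 hxS (adj_same_clique hp) (adj_v0 hl0) hadj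
      · -- x = v1
        subst hct
        exact tri hp1 hp2 hxS (adj_same_clique hp) (adj_v1 hl0) hadj
      · -- x = w
        exact tri hp1 hp2 hxS (adj_same_clique hp) (adj_w hl0) hadj
    have hbb : b = !(!b) := (Bool.not_not b).symm
    have key1 := key b (!b) rfl i1 i2 j1 j2 hi hj hu1 hu2 hw1 hw2
    have key2 := key b (!b) rfl i2 i1 j1 j2 hi.symm hj hu2 hu1 hw1 hw2
    have key3 := key (!b) b hbb j1 j2 i1 i2 hj hi hw1 hw2 hu1 hu2
    have key4 := key (!b) b hbb j2 j1 i1 i2 hj.symm hi hw2 hw1 hu1 hu2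
    set Q : Set (GknVert k n) :=
      {Sum.inl (b,l,i1), Sum.inl (b,l,i2), Sum.inl (!b,l,j1), Sum.inl (!b,l,j2)} with hQdef
    have hQ4 : Q.ncard ≤ 4 := by
      have e1 := Set.ncard_insert_le (Sum.inl (b,l,i1))
        ({Sum.inl (b,l,i2), Sum.inl (!b,l,j1), Sum.inl (!b,l,j2)} : Set (GknVert k n))
      have e2 := Set.ncard_insert_le (Sum.inl (b,l,i2))
        ({Sum.inl (!b,l,j1), Sum.inl (!b,l,j2)} : Set (GknVert k n))
      have e3 := Set.ncard_insert_le (Sum.inl (!b,l,j1))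
        ({Sum.inl (!b,l,j2)} : Set (GknVert k n))
      have e4 : ({Sum.inl (!b,l,j2)} : Set (GknVert k n)).ncard = 1 := Set.ncard_singleton _
      rw [hQdef]
      omega
    obtain ⟨x, hxS, hxQ⟩ : ∃ x ∈ S, x ∉ Q := by
      by_contra hcon
      push_neg at hcon
      have := Set.ncard_le_ncard hcon (Set.toFinite _)
      omega
    simp only [hQdef, Set.mem_insert_iff, Set.mem_singleton_iff, not_or] at hxQ
    obtain ⟨hx1, hx2, hx3, hx4⟩ := hxQ
    obtain ⟨p⟩ := hconn.preconnected ⟨Sum.inl (b,l,i1), hu1⟩ ⟨x, hxS⟩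
    obtain ⟨d, hd, hdf, hds⟩ := p.exists_boundary_dart {v : ↥S | (v : GknVert k n) ∈ Q}
      (by simp [hQdef]) (by simp [hQdef, hx1, hx2, hx3, hx4])
    have hadj : G.Adj (d.fst : GknVert k n) (d.snd : GknVert k n) := d.adj
    have hsndS : (d.snd : GknVert k n) ∈ S := d.snd.2
    simp only [hQdef, Set.mem_setOf_eq, Set.mem_insert_iff, Set.mem_singleton_iff,
      not_or] at hdf hds
    obtain ⟨hs1, hs2, hs3, hs4⟩ := hds
    rcases hdf with h | h | h | h
    · exact key1 _ hsndS hs1 hs2 hs3 hs4 (h ▸ hadj)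
    · exact key2 _ hsndS hs2 hs1 hs3 hs4 (h ▸ hadj)
    · exact key3 _ hsndS hs3 hs4 hs1 hs2 (h ▸ hadj)
    · exact key4 _ hsndS hs4 hs3 hs1 hs2 (h ▸ hadj)
  refine ⟨part1, ?_, ?_⟩
  · intro b l b' l' hl hc2
    by_contra hgt
    push_neg at hgt
    have hc2' : 2 ≤ (S ∩ gknClique k n b' l').ncard := hgt
    rcases hl with h | h
    · exact auxI b l b' l' h hc2 hc2'
    · exact auxI b' l' b l h hc2' hc2
  · intro b l hc2
    by_contra hgt
    push_neg at hgt
    exact auxII b l hc2 hgt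
end
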